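/- arXiv:2202.10299 — 2 statements merged into one kernel-verified Lean document; each statement's English description precedes it below -/
import Mathlib

section
/- For i = 1,2, let H_i be a complex Hilbert space, A_i a pure isometry on H_i, M_i ⊆ H_i a closed subspace invariant under A_i, and R_i = M_i ⊖ A_i(M_i) the associated wandering subspace for A_i. If Φ : H₁ → H₂ is an isometry such that Φ A₁ = A₂ Φ, then Φ(M₁) = M₂ if and only if Φ(R₁) = R₂. -/
open scoped InnerProductSpace

/-!
For `Φ(M₁) = M₂ → Φ(R₁) = R₂`: an isometry preserves inner products, so it carries
`M₁ ⊓ (A₁ M₁)ᗮ` onto `Φ M₁ ⊓ (Φ A₁ M₁)ᗮ`, and `Φ A₁ M₁ = A₂ Φ M₁`.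

For the converse we use the wandering subspace theorem: for a pure isometry `A` and a closed
invariant `M`, the images `Aʲ R` of `R = M ⊖ A M` span a dense subspace of `M`. Indeed, if
`g ∈ M` is orthogonal to all of them and `g = Aⁿ m` with `m ∈ M`, split `m = A m' + r` with
`r ∈ R`; then `Aⁿ r ⊥ g` and `Aⁿ r ⊥ Aⁿ⁺¹ m'`, so `Aⁿ r = 0` and `g = Aⁿ⁺¹ m'`. Hence `g` lies in
every `Aʲ H`, so `g = 0`. Since `Φ` intertwines the powers of `A₁` and `A₂` and commutes with
closures, `Φ(R₁) = R₂` then gives `Φ(M₁) = M₂`.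
-/

theorem Isometry.iterate {α : Type*} [PseudoEMetricSpace α] {f : α → α} (hf : Isometry f)
    (n : ℕ) : Isometry f^[n] := by
  induction n with
  | zero => exact isometry_id
  | succ n ih => exact ih.comp hf

theorem LinearIsometry.map_topologicalClosure {𝕜 E F : Type*} [NormedField 𝕜]
    [NormedAddCommGroup E] [NormedSpace 𝕜 E] [CompleteSpace E]
    [NormedAddCommGroup F] [NormedSpace 𝕜 F] (f : E →ₗᵢ[𝕜] F) (S : Submodule 𝕜 E) :
    S.topologicalClosure.map f.toLinearMap = (S.map f.toLinearMap).topologicalClosure :=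
  SetLike.coe_injective <| by
    simp only [Submodule.map_coe, Submodule.topologicalClosure_coe]
    exact (f.isometry.isClosedEmbedding.closure_image_eq (S : Set E)).symm

section InnerProductSpace

variable {𝕜 E F : Type*} [RCLike 𝕜] [NormedAddCommGroup E] [InnerProductSpace 𝕜 E]
  [NormedAddCommGroup F] [InnerProductSpace 𝕜 F]

theorem inner_map_map_of_isometry {G : Type*} [FunLike G E F] [LinearMapClass G 𝕜 E F] {f : G}
    (hf : Isometry f) (x y : E) : ⟪f x, f y⟫_𝕜 = ⟪x, y⟫_𝕜 :=
  LinearIsometry.inner_map_map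
    ⟨(f : E →ₗ[𝕜] F), (AddMonoidHomClass.isometry_iff_norm f).1 hf⟩ x y

theorem LinearIsometry.map_inf_orthogonal (f : E →ₗᵢ[𝕜] F) (M N : Submodule 𝕜 E) :
    (M ⊓ Nᗮ).map f.toLinearMap = M.map f.toLinearMap ⊓ (N.map f.toLinearMap)ᗮ := by
  rw [Submodule.map_inf _ f.injective, N.map_orthogonal f, ← inf_assoc, inf_right_comm,
    inf_eq_left.2 LinearMap.map_le_range]

def wanderingSubspace (A : E →L[𝕜] E) (M : Submodule 𝕜 E) : Submodule 𝕜 E :=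
  M ⊓ (M.map (A : E →ₗ[𝕜] E))ᗮ

section WanderingSubspace

variable {A : E →L[𝕜] E} {M : Submodule 𝕜 E}

theorem map_pow_le_of_invariant (hMinv : ∀ f ∈ M, A f ∈ M) (j : ℕ) :
    M.map ((A ^ j : E →L[𝕜] E) : E →ₗ[𝕜] E) ≤ M := by
  rw [ContinuousLinearMap.toLinearMap_pow, Submodule.map_le_iff_le_comap]
  exact M.le_comap_pow_of_le_comap hMinv j

variable [CompleteSpace E]

theorem mem_map_pow_succ_of_mem_orthogonal_wanderingSubspace (hA : Isometry A)
    (hMc : IsClosed (M : Set E)) (hMinv : ∀ f ∈ M, A f ∈ M) {n : ℕ} {g : E}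
    (hg : g ∈ M.map ((A ^ n : E →L[𝕜] E) : E →ₗ[𝕜] E))
    (hgR : g ∈ ((wanderingSubspace A M).map ((A ^ n : E →L[𝕜] E) : E →ₗ[𝕜] E))ᗮ) :
    g ∈ M.map ((A ^ (n + 1) : E →L[𝕜] E) : E →ₗ[𝕜] E) := by
  obtain ⟨m, hm, rfl⟩ := hg
  set N := M.map (A : E →ₗ[𝕜] E)
  have : CompleteSpace N := (hA.isClosedEmbedding.isClosedMap _ hMc).completeSpace_coe
  set p := N.starProjection m
  have hpN : p ∈ N := N.starProjection_apply_mem m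
  have hr : m - p ∈ wanderingSubspace A M :=
    ⟨M.sub_mem hm (Submodule.map_le_iff_le_comap.2 hMinv hpN),
      N.sub_starProjection_mem_orthogonal m⟩
  have hAn : Isometry (A ^ n) := by
    rw [FunLike.coe_pow_eq_iterate]; exact hA.iterate n
  have hr_perp_m : ⟪(A ^ n) (m - p), (A ^ n) m⟫_𝕜 = 0 :=
    Submodule.inner_right_of_mem_orthogonal (Submodule.mem_map_of_mem hr) hgR
  have hr_perp_p : ⟪(A ^ n) (m - p), (A ^ n) p⟫_𝕜 = 0 := by
    rw [inner_map_map_of_isometry hAn]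
    exact Submodule.inner_left_of_mem_orthogonal hpN hr.2
  have hAnr : (A ^ n) (m - p) = 0 := by
    have h : ⟪(A ^ n) (m - p), (A ^ n) m - (A ^ n) p⟫_𝕜 = 0 := by
      rw [inner_sub_right, hr_perp_m, hr_perp_p, sub_zero]
    rwa [← map_sub, inner_self_eq_zero] at h
  obtain ⟨m', hm', hm'p⟩ := hpN
  rw [ContinuousLinearMap.coe_coe] at hm'p
  refine ⟨m', hm', ?_⟩
  calc (A ^ (n + 1)) m' = (A ^ n) p := by rw [← hm'p, pow_succ]; rfl
    _ = (A ^ n) m := (sub_eq_zero.1 (by rw [← map_sub, hAnr])).symm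

theorem topologicalClosure_iSup_map_pow_wanderingSubspace (hA : Isometry A)
    (hpure : ⨅ j : ℕ, (⊤ : Submodule 𝕜 E).map ((A ^ j : E →L[𝕜] E) : E →ₗ[𝕜] E) = ⊥)
    (hMc : IsClosed (M : Set E)) (hMinv : ∀ f ∈ M, A f ∈ M) :
    (⨆ j : ℕ, (wanderingSubspace A M).map ((A ^ j : E →L[𝕜] E) : E →ₗ[𝕜] E)).topologicalClosure
      = M := by
  set K := (⨆ j : ℕ,
    (wanderingSubspace A M).map ((A ^ j : E →L[𝕜] E) : E →ₗ[𝕜] E)).topologicalClosure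
  have hKM : K ≤ M := Submodule.topologicalClosure_minimal _
    (iSup_le fun j => (Submodule.map_mono inf_le_left).trans (map_pow_le_of_invariant hMinv j)) hMc
  have hMK : Kᗮ ⊓ M = ⊥ := by
    refine eq_bot_iff.2 fun g ⟨hgK, hgM⟩ => ?_
    have hg : ∀ n : ℕ, g ∈ M.map ((A ^ n : E →L[𝕜] E) : E →ₗ[𝕜] E) := by
      intro n
      induction n with
      | zero => simpa using hgM
      | succ n ih =>
        have hRn : (wanderingSubspace A M).map ((A ^ n : E →L[𝕜] E) : E →ₗ[𝕜] E) ≤ K :=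
          (le_iSup (fun j => (wanderingSubspace A M).map ((A ^ j : E →L[𝕜] E) : E →ₗ[𝕜] E))
            n).trans (Submodule.le_topologicalClosure _)
        exact mem_map_pow_succ_of_mem_orthogonal_wanderingSubspace hA hMc hMinv ih
          (Submodule.orthogonal_le hRn hgK)
    rw [← hpure]
    exact Submodule.mem_iInf _ |>.2 fun j => Submodule.map_mono le_top (hg j)
  have : CompleteSpace K := (Submodule.isClosed_topologicalClosure _).completeSpace_coe
  rw [← Submodule.sup_orthogonal_inf_of_hasOrthogonalProjection hKM, hMK, sup_bot_eq]

end WanderingSubspace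

end InnerProductSpace

theorem statement3 {H₁ H₂ : Type*}
    [NormedAddCommGroup H₁] [InnerProductSpace ℂ H₁] [CompleteSpace H₁]
    [NormedAddCommGroup H₂] [InnerProductSpace ℂ H₂] [CompleteSpace H₂]
    (A₁ : H₁ →L[ℂ] H₁) (A₂ : H₂ →L[ℂ] H₂) (hA₁ : Isometry A₁) (hA₂ : Isometry A₂)
    (hp₁ : (⨅ j : ℕ, Submodule.map ((A₁ ^ j : H₁ →L[ℂ] H₁) : H₁ →ₗ[ℂ] H₁) (⊤ : Submodule ℂ H₁)) = ⊥)
    (hp₂ : (⨅ j : ℕ, Submodule.map ((A₂ ^ j : H₂ →L[ℂ] H₂) : H₂ →ₗ[ℂ] H₂) (⊤ : Submodule ℂ H₂)) = ⊥)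
    (M₁ : Submodule ℂ H₁) (hM₁c : IsClosed ((M₁ : Set H₁))) (hM₁inv : ∀ f ∈ M₁, A₁ f ∈ M₁)
    (M₂ : Submodule ℂ H₂) (hM₂c : IsClosed ((M₂ : Set H₂))) (hM₂inv : ∀ f ∈ M₂, A₂ f ∈ M₂)
    (Φ : H₁ →ₗ[ℂ] H₂) (hΦ : Isometry Φ) (hcomm : ∀ x, Φ (A₁ x) = A₂ (Φ x)) :
    Submodule.map Φ M₁ = M₂ ↔
      Submodule.map Φ (M₁ ⊓ (Submodule.map (A₁ : H₁ →ₗ[ℂ] H₁) M₁)ᗮ) = M₂ ⊓ (Submodule.map (A₂ : H₂ →ₗ[ℂ] H₂) M₂)ᗮ := by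
  let Φᵢ : H₁ →ₗᵢ[ℂ] H₂ := ⟨Φ, (AddMonoidHomClass.isometry_iff_norm Φ).1 hΦ⟩
  have hcomm' : (A₂ : H₂ →ₗ[ℂ] H₂) ∘ₗ Φᵢ.toLinearMap = Φᵢ.toLinearMap ∘ₗ (A₁ : H₁ →ₗ[ℂ] H₁) :=
    LinearMap.ext fun x => (hcomm x).symm
  change M₁.map Φᵢ.toLinearMap = M₂ ↔
    (wanderingSubspace A₁ M₁).map Φᵢ.toLinearMap = wanderingSubspace A₂ M₂
  constructor
  · intro h
    have hA₁M₁ : (M₁.map (A₁ : H₁ →ₗ[ℂ] H₁)).map Φᵢ.toLinearMap = M₂.map (A₂ : H₂ →ₗ[ℂ] H₂) := by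
      rw [← Submodule.map_comp, ← hcomm', Submodule.map_comp, ← h]
    rw [wanderingSubspace, Φᵢ.map_inf_orthogonal, h]
    exact congrArg (fun N => M₂ ⊓ Nᗮ) hA₁M₁
  · intro h
    have hpow : ∀ j : ℕ, ((A₂ ^ j : H₂ →L[ℂ] H₂) : H₂ →ₗ[ℂ] H₂) ∘ₗ Φᵢ.toLinearMap =
        Φᵢ.toLinearMap ∘ₗ ((A₁ ^ j : H₁ →L[ℂ] H₁) : H₁ →ₗ[ℂ] H₁) := fun j => by
      simpa only [ContinuousLinearMap.toLinearMap_pow] using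
        Module.End.commute_pow_left_of_commute hcomm' j
    rw [← topologicalClosure_iSup_map_pow_wanderingSubspace hA₁ hp₁ hM₁c hM₁inv,
      ← topologicalClosure_iSup_map_pow_wanderingSubspace hA₂ hp₂ hM₂c hM₂inv,
      Φᵢ.map_topologicalClosure, Submodule.map_iSup, ← h]
    simp only [← Submodule.map_comp, hpow]
end

section
/- Let K be a separable complex Hilbert space. A closed subspace M ⊆ L²(𝕋,K) is reducing for the bilateral shift U if and only if there exists a measurable range function J in K such that M = {f ∈ L²(𝕋,K) : f(λ) ∈ J(λ) for a.e. λ ∈ 𝕋}. Identifying range functions that agree almost everywhere, this correspondence between reducing subspaces for U and measurable range functions is one-to-one and onto. Moreover, if M is the closed linear span of {U^k f : f ∈ A, k ∈ ℤ} for an at most countable set A ⊆ L²(𝕋,K), then the measurable range function associated to M satisfies J(λ) = closed linear span of {f(λ) : f ∈ A} for a.e. λ ∈ 𝕋. -/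
noncomputable section

open MeasureTheory Complex Submodule
open scoped InnerProductSpace ENNReal ComplexConjugate

set_option synthInstance.maxHeartbeats 1000000
set_option maxHeartbeats 1600000

namespace ShiftPaper

instance : Fact ((0:ℝ) < 1) := ⟨one_pos⟩

/-- The circle, modelled as `ℝ/ℤ`. -/
abbrev 𝕋 : Type := UnitAddCircle

/-- The normalized Haar (Lebesgue) probability measure on the circle. -/
abbrev μT : Measure 𝕋 := AddCircle.haarAddCircle

/-- The space `L²(𝕋, E)` of square-integrable `E`-valued functions on the circle. -/
abbrev L2 (E : Type*) [NormedAddCommGroup E] := Lp E 2 μT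

lemma norm_fourier (n : ℤ) (t : 𝕋) : ‖fourier n t‖ = 1 := by
  rw [fourier_apply, Circle.norm_coe]

section mulF

variable {E : Type*} [NormedAddCommGroup E] [NormedSpace ℂ E]

lemma memLp_mulF (n : ℤ) (f : L2 E) :
    MemLp (fun t => fourier n t • (f : 𝕋 → E) t) 2 μT := by
  refine MemLp.of_le (Lp.memLp f)
    (((fourier n).continuous.aestronglyMeasurable).smul (Lp.aestronglyMeasurable f)) ?_
  refine Filter.Eventually.of_forall fun t => ?_
  rw [norm_smul, norm_fourier, one_mul]

/-- Multiplication by `fourier n` (i.e. by `λ ↦ λⁿ`) as a bounded operator on `L²(𝕋, E)`.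
For `n = 1` this is the bilateral shift `U`; for general `n : ℤ` it is `Uⁿ`. -/
def mulF (n : ℤ) : L2 E →L[ℂ] L2 E :=
  LinearMap.mkContinuous
    { toFun := fun f => (memLp_mulF n f).toLp _
      map_add' := fun f g => by
        rw [← MemLp.toLp_add (memLp_mulF n f) (memLp_mulF n g)]
        refine MemLp.toLp_congr _ _ ?_
        filter_upwards [Lp.coeFn_add f g] with t ht
        simp only [ht, Pi.add_apply, smul_add]
      map_smul' := fun c f => by
        simp only [RingHom.id_apply]
        rw [← MemLp.toLp_const_smul c (memLp_mulF n f)]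
        refine MemLp.toLp_congr _ _ ?_
        filter_upwards [Lp.coeFn_smul c f] with t ht
        rw [ht]
        simp only [Pi.smul_apply]
        rw [smul_comm] }
    1
    (fun f => by
      simp only [LinearMap.coe_mk, AddHom.coe_mk, one_mul]
      rw [Lp.norm_toLp _ (memLp_mulF n f), Lp.norm_def]
      refine le_of_eq (congrArg ENNReal.toReal ?_)
      refine eLpNorm_congr_norm_ae ?_
      refine Filter.Eventually.of_forall fun t => ?_
      rw [norm_smul, norm_fourier, one_mul])

lemma coeFn_mulF (n : ℤ) (f : L2 E) :
    (mulF n f : 𝕋 → E) =ᵐ[μT] fun t => fourier n t • (f : 𝕋 → E) t :=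
  MemLp.coeFn_toLp (memLp_mulF n f)

end mulF

section HardySpace

variable (K : Type) [NormedAddCommGroup K] [InnerProductSpace ℂ K] [CompleteSpace K]

/-- The continuous function `t ↦ fourier n t • x`. -/
def fourierSmulCM (n : ℤ) (x : K) : C(𝕋, K) :=
  ⟨fun t => fourier n t • x, (fourier n).continuous.smul continuous_const⟩

/-- The element of `L²(𝕋, K)` given by `t ↦ fourier n t • x`. -/
def expVec (n : ℤ) (x : K) : L2 K := ContinuousMap.toLp 2 μT ℂ (fourierSmulCM K n x)

lemma coeFn_expVec (n : ℤ) (x : K) :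
    (expVec K n x : 𝕋 → K) =ᵐ[μT] fun t => fourier n t • x :=
  ContinuousMap.coeFn_toLp (𝕜 := ℂ) μT (fourierSmulCM K n x)

/-- The Hardy space `H²(𝕋, K)`, as the subspace of `L²(𝕋, K)` of functions all of whose
weak Fourier coefficients of negative index vanish (equivalently, all of whose coordinate
functions with respect to an orthonormal basis of `K` lie in the scalar Hardy space `H²`). -/
def Hardy : Submodule ℂ (L2 K) :=
  ⨅ (n : ℤ) (_ : n < 0) (x : K), LinearMap.ker (innerSL ℂ (expVec K n x) : L2 K →ₗ[ℂ] ℂ)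

lemma isClosed_Hardy : IsClosed ((Hardy K : Set (L2 K))) := by
  have h : (Hardy K : Set (L2 K)) = ⋂ (n : ℤ) (_ : n < 0) (x : K),
      (LinearMap.ker (innerSL ℂ (expVec K n x) : L2 K →ₗ[ℂ] ℂ) : Set (L2 K)) := by
    simp only [Hardy, Submodule.coe_iInf]
  rw [h]
  exact isClosed_iInter fun n => isClosed_iInter fun _ => isClosed_iInter fun x =>
    (ContinuousLinearMap.isClosed_ker _)

/-- The Hardy space `H²(𝕋, K)` as a Hilbert space in its own right. -/
abbrev H2 := ↥(Hardy K)

instance : CompleteSpace (H2 K) := (isClosed_Hardy K).completeSpace_coe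

end HardySpace


section Shift

variable (K : Type) [NormedAddCommGroup K] [InnerProductSpace ℂ K] [CompleteSpace K]

lemma inner_expVec_mulF (n : ℤ) (x : K) (f : L2 K) :
    (inner ℂ (expVec K n x) (mulF 1 f) : ℂ) = inner ℂ (expVec K (n - 1) x) f := by
  rw [MeasureTheory.L2.inner_def, MeasureTheory.L2.inner_def]
  refine integral_congr_ae ?_
  filter_upwards [coeFn_mulF 1 f, coeFn_expVec K n x, coeFn_expVec K (n-1) x] with t h1 h2 h3
  rw [h1, h2, h3, inner_smul_left, inner_smul_left, inner_smul_right,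
    ← fourier_neg, ← fourier_neg, ← mul_assoc, ← fourier_add]
  have h : -n + 1 = -(n - 1) := by ring
  rw [h]

lemma mulF_mem_hardy {f : L2 K} (hf : f ∈ Hardy K) : mulF 1 f ∈ Hardy K := by
  simp only [Hardy, Submodule.mem_iInf, LinearMap.mem_ker, ContinuousLinearMap.coe_coe, innerSL_apply_apply] at hf ⊢
  intro n hn x
  rw [inner_expVec_mulF]
  exact hf (n - 1) (by omega) x

/-- The unilateral shift `S` on the Hardy space `H²(𝕋, K)`: the restriction of the
bilateral shift (multiplication by the variable) to the Hardy space. -/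
def S : H2 K →L[ℂ] H2 K where
  toLinearMap := (mulF (E := K) 1).toLinearMap.restrict
    (p := Hardy K) (q := Hardy K) (fun _ hx => mulF_mem_hardy K hx)
  cont := by
    apply Continuous.subtype_mk
    exact (mulF (E := K) 1).continuous.comp continuous_subtype_val

/-- The operator `Ŝ` on `L²(𝕋, H²(𝕋,K))`, acting pointwisely (on the values) as the
unilateral shift `S`. -/
def Shat : L2 (H2 K) →L[ℂ] L2 (H2 K) := (S K).compLpL 2 μT

lemma integral_fourier_eq_zero {m : ℤ} (hm : m ≠ 0) :
    ∫ t : 𝕋, fourier m t ∂μT = 0 := by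
  have h0 : ((0:ℤ)) ≠ m := fun h => hm h.symm
  have h : (inner ℂ (fourierLp (T := 1) 2 (0:ℤ)) (fourierLp 2 m) : ℂ) = 0 :=
    orthonormal_fourier.2 h0
  rw [MeasureTheory.L2.inner_def] at h
  rw [← h]
  refine integral_congr_ae ?_
  filter_upwards [coeFn_fourierLp 2 (0:ℤ), coeFn_fourierLp 2 m] with t h1 h2
  rw [h1, h2]
  simp [fourier_zero]

lemma const_mem_hardy (x : K) : expVec K 0 x ∈ Hardy K := by
  simp only [Hardy, Submodule.mem_iInf, LinearMap.mem_ker, ContinuousLinearMap.coe_coe, innerSL_apply_apply]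
  intro n hn y
  rw [MeasureTheory.L2.inner_def]
  have h : ∀ᵐ t ∂μT, (inner ℂ ((expVec K n y : 𝕋 → K) t) ((expVec K 0 x : 𝕋 → K) t) : ℂ)
      = fourier (-n) t * (inner ℂ y x : ℂ) := by
    filter_upwards [coeFn_expVec K n y, coeFn_expVec K 0 x] with t h1 h2
    rw [h1, h2, inner_smul_left, inner_smul_right, ← fourier_neg, fourier_zero, one_mul]
  rw [integral_congr_ae h, integral_mul_const,
    integral_fourier_eq_zero (by omega), zero_mul]

/-- The linear embedding of `K` into `H²(𝕋,K)` as constant functions. -/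
def constL : K →ₗ[ℂ] H2 K where
  toFun x := ⟨expVec K 0 x, const_mem_hardy K x⟩
  map_add' x y := by
    apply Subtype.ext
    simp only [Submodule.coe_add]
    unfold expVec
    rw [← map_add]
    congr 1
    ext t
    simp [fourierSmulCM, smul_add]
  map_smul' c x := by
    apply Subtype.ext
    simp only [RingHom.id_apply, SetLike.val_smul]
    unfold expVec
    rw [← _root_.map_smul]
    congr 1
    ext t
    simp [fourierSmulCM]

end Shift


section RangeFunctions

variable {F : Type*} [NormedAddCommGroup F] [InnerProductSpace ℂ F] [CompleteSpace F]

/-- The orthogonal projection onto a closed subspace, as a plain function (defined to be `0`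
if the subspace is not closed). -/
def projTo (N : Submodule ℂ F) (x : F) : F :=
  letI := Classical.dec (IsClosed ((N : Set F)))
  if h : IsClosed ((N : Set F)) then
    haveI : CompleteSpace N := h.completeSpace_coe
    (orthogonalProjection N x : F)
  else 0

/-- A measurable range function in `F`: a map `J` from `𝕋` to closed subspaces of `F` such
that `t ↦ ⟪P_{J(t)} x, y⟫` is measurable for every `x, y ∈ F`. -/
def IsMeasRange (J : 𝕋 → Submodule ℂ F) : Prop :=
  (∀ t, IsClosed ((J t : Set F))) ∧
  ∀ x y : F, Measurable fun t => (inner ℂ (projTo (J t) x) y : ℂ)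

/-- The set of `f ∈ L²(𝕋, E)` such that `f(t) ∈ J(t)` for a.e. `t ∈ 𝕋`. -/
def rangeSet {E : Type*} [NormedAddCommGroup E] [NormedSpace ℂ E]
    (J : 𝕋 → Submodule ℂ E) : Set (L2 E) :=
  {f | ∀ᵐ t ∂μT, (f : 𝕋 → E) t ∈ J t}

end RangeFunctions

section OperatorNotions

variable {E : Type*} [NormedAddCommGroup E] [NormedSpace ℂ E]

/-- A subspace `M` is invariant under the bounded operator `A` if `A(M) ⊆ M`. -/
def InvariantUnder (A : E →L[ℂ] E) (M : Submodule ℂ E) : Prop :=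
  ∀ f ∈ M, A f ∈ M

/-- Two bounded operators commute. -/
def CommutesWith (A B : E →L[ℂ] E) : Prop := ∀ f, A (B f) = B (A f)

variable {F : Type*} [NormedAddCommGroup F] [InnerProductSpace ℂ F]

/-- A subspace `M` is reducing for `A` if both `M` and `M^⊥` are invariant under `A`. -/
def Reducing (A : F →L[ℂ] F) (M : Submodule ℂ F) : Prop :=
  InvariantUnder A M ∧ InvariantUnder A Mᗮ

/-- `Φ` is a partial isometry with initial space `W`: it is isometric on `W` and vanishes
on `W^⊥`. -/
def IsPartialIsometryOn (Φ : F →L[ℂ] F) (W : Submodule ℂ F) : Prop :=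
  (∀ f ∈ W, ‖Φ f‖ = ‖f‖) ∧ ∀ f ∈ Wᗮ, Φ f = 0

end OperatorNotions

section FullHardy

variable (K : Type) [NormedAddCommGroup K] [InnerProductSpace ℂ K] [CompleteSpace K]

/-- For a subspace `N ⊆ K`, the subspace `H²_N` of `H²_K`: those elements of the Hardy space
taking values in `N` almost everywhere. -/
def hardyIn (N : Submodule ℂ K) : Submodule ℂ (H2 K) where
  carrier := {g | ∀ᵐ z ∂μT, ((g : L2 K) : 𝕋 → K) z ∈ N}
  zero_mem' := by
    have h0 : ((0 : H2 K) : L2 K) = 0 := rfl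
    rw [Set.mem_setOf_eq, h0]
    filter_upwards [Lp.coeFn_zero K 2 μT] with z hz
    rw [hz]
    exact N.zero_mem
  add_mem' := by
    intro a b ha hb
    have h0 : ((a + b : H2 K) : L2 K) = (a : L2 K) + (b : L2 K) := rfl
    rw [Set.mem_setOf_eq, h0]
    filter_upwards [ha, hb, Lp.coeFn_add (a : L2 K) (b : L2 K)] with z ha' hb' hadd
    rw [hadd]
    exact N.add_mem ha' hb'
  smul_mem' := by
    intro c a ha
    have h0 : ((c • a : H2 K) : L2 K) = c • (a : L2 K) := rfl
    rw [Set.mem_setOf_eq, h0]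
    filter_upwards [ha, Lp.coeFn_smul c (a : L2 K)] with z ha' hsmul
    rw [hsmul]
    exact N.smul_mem c ha'

/-- The set of `f ∈ L²(𝕋, H²_K)` with `f(t) ∈ H²_{J(t)}` for a.e. `t`. If `J` is a measurable
range function in `K`, this is the full-Hardy subspace with base `J`. -/
def fullHardySet (J : 𝕋 → Submodule ℂ K) : Set (L2 (H2 K)) :=
  {f | ∀ᵐ t ∂μT, (f : 𝕋 → H2 K) t ∈ hardyIn K (J t)}

/-- A subspace `W ⊆ L²(𝕋, H²_K)` is full-Hardy if it is of the form
`{f : f(t) ∈ H²_{J(t)} a.e.}` for some measurable range function `J` in `K`. -/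
def IsFullHardy (W : Submodule ℂ (L2 (H2 K))) : Prop :=
  ∃ J : 𝕋 → Submodule ℂ K, IsMeasRange J ∧ (W : Set (L2 (H2 K))) = fullHardySet K J

end FullHardy

section Dimension

open scoped Classical in
/-- The Hilbert-space dimension of a subspace, as an element of `ℕ∞` (in a separable ambient
space this is the cardinality of any orthonormal basis). -/
def dimSub {F : Type*} [NormedAddCommGroup F] [InnerProductSpace ℂ F]
    (N : Submodule ℂ F) : ℕ∞ :=
  if FiniteDimensional ℂ ↥N then (Module.finrank ℂ ↥N : ℕ∞) else ⊤

end Dimension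

section ScalarCase

/-- Evaluation of an element of the scalar Hardy space (via its chosen representative). -/
def ev (g : H2 ℂ) (z : 𝕋) : ℂ := ((g : L2 ℂ) : 𝕋 → ℂ) z

/-- Iterated evaluation of an element of `L²(𝕋, H²)`. -/
def ev2 (f : L2 (H2 ℂ)) (t z : 𝕋) : ℂ := ev ((f : 𝕋 → H2 ℂ) t) z

/-- A function `h ∈ H²` is inner if `|h(z)| = 1` for a.e. `z ∈ 𝕋`. -/
def IsInnerFn (g : H2 ℂ) : Prop := ∀ᵐ z ∂μT, ‖ev g z‖ = 1

lemma ev_zero : ∀ᵐ z ∂μT, ev (0 : H2 ℂ) z = 0 := by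
  have h0 : ((0 : H2 ℂ) : L2 ℂ) = 0 := rfl
  unfold ev
  rw [h0]
  filter_upwards [Lp.coeFn_zero ℂ 2 μT] with z hz
  rw [hz]
  rfl

lemma ev_add (u v : H2 ℂ) : ∀ᵐ z ∂μT, ev (u + v) z = ev u z + ev v z := by
  have h0 : ((u + v : H2 ℂ) : L2 ℂ) = (u : L2 ℂ) + (v : L2 ℂ) := rfl
  unfold ev
  rw [h0]
  filter_upwards [Lp.coeFn_add (u : L2 ℂ) (v : L2 ℂ)] with z hz
  rw [hz]
  rfl

lemma ev_smul (c : ℂ) (u : H2 ℂ) : ∀ᵐ z ∂μT, ev (c • u) z = c * ev u z := by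
  have h0 : ((c • u : H2 ℂ) : L2 ℂ) = c • (u : L2 ℂ) := rfl
  unfold ev
  rw [h0]
  filter_upwards [Lp.coeFn_smul c (u : L2 ℂ)] with z hz
  rw [hz]
  rfl

/-- For `w ∈ H²`, the subspace `w·H² = {w·k : k ∈ H²}` of `H²` (membership described via
a.e. pointwise multiplication of representatives). -/
def mulSet (w : H2 ℂ) : Submodule ℂ (H2 ℂ) where
  carrier := {u | ∃ k : H2 ℂ, ∀ᵐ z ∂μT, ev u z = ev w z * ev k z}
  zero_mem' := by
    refine ⟨0, ?_⟩
    filter_upwards [ev_zero] with z hz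
    rw [hz, mul_zero]
  add_mem' := by
    rintro u v ⟨k₁, h₁⟩ ⟨k₂, h₂⟩
    refine ⟨k₁ + k₂, ?_⟩
    filter_upwards [h₁, h₂, ev_add u v, ev_add k₁ k₂] with z e1 e2 e3 e4
    rw [e3, e1, e2, e4, mul_add]
  smul_mem' := by
    rintro c u ⟨k, h⟩
    refine ⟨c • k, ?_⟩
    filter_upwards [h, ev_smul c u, ev_smul c k] with z e1 e2 e3
    rw [e2, e1, e3]
    ring

/-- The set `φ·L²(𝕋, H²) = {φ g : g ∈ L²(𝕋,H²)}`, where `(φ g)(t)(z) = φ(t)(z)·g(t)(z)`. -/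
def timesSet (φ : L2 (H2 ℂ)) : Set (L2 (H2 ℂ)) :=
  {h | ∃ g : L2 (H2 ℂ), ∀ᵐ t ∂μT, ∀ᵐ z ∂μT, ev2 h t z = ev2 φ t z * ev2 g t z}

end ScalarCase
/-!
A closed reducing subspace `M` of the bilateral shift `U` is invariant under every power `Uⁿ`,
so for `f ∈ M` and `h ∈ Mᗮ` the integrable function `t ↦ ⟪f(t), h(t)⟫` has vanishing Fourier
coefficients and hence vanishes a.e. Projecting a dense sequence of constant functions `dₖ` onto
`M` gives `gₖ ∈ M` with `dₖ - gₖ ∈ Mᗮ`; pointwise, `gₖ(t)` is then the projection of `dₖ` onto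
`J(t) = closure (span {gₖ(t)})`, and this forces `M = {f : f(t) ∈ J(t) a.e.}`. `J` is
measurable because Gram–Schmidt writes `P_{J(t)} x` as a series with terms measurable in `t`.
Conversely `J` is determined a.e. by `M`, since the functions `t ↦ P_{J(t)} dₖ` lie in `M`.
-/

open Set Filter Topology InnerProductSpace
open scoped NNReal BoundedContinuousFunction

section Hilbert

variable {𝕜 E : Type*} [RCLike 𝕜] [NormedAddCommGroup E] [InnerProductSpace 𝕜 E]

theorem mem_orthogonal_span_iff {s : Set E} {v : E} :
    v ∈ (span 𝕜 s)ᗮ ↔ ∀ u ∈ s, ⟪u, v⟫_𝕜 = 0 := by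
  refine ⟨fun h u hu => h u (subset_span hu), fun h => ?_⟩
  have : span 𝕜 s ≤ (𝕜 ∙ v)ᗮ :=
    span_le.mpr fun u hu => mem_orthogonal_singleton_iff_inner_left.mpr (h u hu)
  exact fun u hu => mem_orthogonal_singleton_iff_inner_left.mp (this hu)

theorem le_of_forall_starProjection_mem {N₁ N₂ : Submodule 𝕜 E} [N₁.HasOrthogonalProjection]
    (h₂ : IsClosed (N₂ : Set E)) {ι : Type*} {d : ι → E} (hd : DenseRange d)
    (h : ∀ k, N₁.starProjection (d k) ∈ N₂) : N₁ ≤ N₂ := by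
  intro v hv
  rw [← starProjection_eq_self_iff.mpr hv]
  exact hd.induction_on v (h₂.preimage N₁.starProjection.continuous) h

section Measurable

variable {α ι : Type*} [MeasurableSpace α] [LinearOrder ι] [LocallyFiniteOrderBot ι]
  [WellFoundedLT ι] {v : ι → α → E}

theorem stronglyMeasurable_gramSchmidt (hv : ∀ n, StronglyMeasurable (v n)) (n : ι) :
    StronglyMeasurable fun t => gramSchmidt 𝕜 (fun k => v k t) n := by
  induction n using WellFoundedLT.induction with
  | _ n ih =>
    simp_rw [gramSchmidt_def 𝕜 (fun k => v k _) n, starProjection_singleton]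
    refine (hv n).sub (Finset.stronglyMeasurable_fun_sum _ fun i hi => ?_)
    have hi := ih i (Finset.mem_Iio.mp hi)
    refine (((hi.inner (hv n)).measurable.div ?_).stronglyMeasurable).smul hi
    exact RCLike.measurable_ofReal.comp (hi.norm.measurable.pow_const 2)

theorem stronglyMeasurable_gramSchmidtNormed (hv : ∀ n, StronglyMeasurable (v n)) (n : ι) :
    StronglyMeasurable fun t => gramSchmidtNormed 𝕜 (fun k => v k t) n := by
  have hgs := stronglyMeasurable_gramSchmidt (𝕜 := 𝕜) hv n
  exact ((RCLike.measurable_ofReal.comp hgs.norm.measurable).inv.stronglyMeasurable).smul hgs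

end Measurable

variable [CompleteSpace E]

theorem hasSum_inner_gramSchmidtNormed_smul (f : ℕ → E) (x : E) :
    HasSum (fun n => ⟪gramSchmidtNormed 𝕜 f n, x⟫_𝕜 • gramSchmidtNormed 𝕜 f n)
      ((span 𝕜 (range f)).topologicalClosure.starProjection x) := by
  set N := (span 𝕜 (range f)).topologicalClosure
  have hspan : span 𝕜 (range (gramSchmidtNormed 𝕜 f)) = span 𝕜 (range f) := by
    rw [span_gramSchmidtNormed_range, span_gramSchmidt]
  have hmem n : gramSchmidtNormed 𝕜 f n ∈ N :=
    le_topologicalClosure _ (hspan ▸ subset_span (mem_range_self n))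
  set S := {n | gramSchmidtNormed 𝕜 f n ≠ 0}
  let w : S → N := fun n => ⟨gramSchmidtNormed 𝕜 f n, hmem n⟩
  have hw : Orthonormal 𝕜 w := (gramSchmidtNormed_orthonormal' f).codRestrict N fun n => hmem n
  have hsp : (span 𝕜 (range w) : Submodule 𝕜 N)ᗮ = ⊥ := by
    refine eq_bot_iff.mpr fun y hy => (Submodule.mem_bot 𝕜).mpr ?_
    rw [mem_orthogonal_span_iff, forall_mem_range] at hy
    have hperp : (y : E) ∈ Nᗮ := by
      rw [orthogonal_closure, ← hspan, mem_orthogonal_span_iff, forall_mem_range]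
      intro n
      by_cases hn : gramSchmidtNormed 𝕜 f n = 0
      · rw [hn, inner_zero_left]
      · exact hy ⟨n, hn⟩
    exact Subtype.ext (inner_self_eq_zero.mp (hperp _ y.2))
  have hS := ((HilbertBasis.mkOfOrthogonalEqBot hw hsp).hasSum_orthogonalProjectionOnto x).mapL
    N.subtypeL
  simp only [HilbertBasis.coe_mkOfOrthogonalEqBot] at hS
  refine (hasSum_subtype_iff_of_support_subset (s := S) fun n hn h0 => hn ?_).mp hS
  simp [show gramSchmidtNormed 𝕜 f n = 0 from h0]

theorem stronglyMeasurable_starProjection_span {α : Type*} [MeasurableSpace α]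
    {v : ℕ → α → E} (hv : ∀ n, StronglyMeasurable (v n)) (x : E) :
    StronglyMeasurable fun t =>
      (span 𝕜 (range fun n => v n t)).topologicalClosure.starProjection x :=
  stronglyMeasurable_of_tendsto atTop
    (fun N => Finset.stronglyMeasurable_fun_sum (Finset.range N) fun n _ =>
      ((stronglyMeasurable_gramSchmidtNormed hv n).inner stronglyMeasurable_const).smul
        (stronglyMeasurable_gramSchmidtNormed hv n))
    (tendsto_pi_nhds.mpr fun _ => (hasSum_inner_gramSchmidtNormed_smul _ x).tendsto_sum_nat)

theorem stronglyMeasurable_of_forall_inner [TopologicalSpace.SeparableSpace E] {α : Type*}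
    [MeasurableSpace α] {g : α → E} (h : ∀ y, Measurable fun t => ⟪y, g t⟫_𝕜) :
    StronglyMeasurable g := by
  have : Nonempty E := ⟨0⟩
  obtain ⟨d, hd⟩ := TopologicalSpace.exists_dense_seq E
  have htop : (span 𝕜 (range d)).topologicalClosure = ⊤ :=
    eq_top_iff.mpr fun x _ => by
      rw [← SetLike.mem_coe, topologicalClosure_coe]
      exact hd.mono subset_span x
  refine stronglyMeasurable_of_tendsto atTop
    (fun N => Finset.stronglyMeasurable_fun_sum (Finset.range N) fun n _ =>
      (h (gramSchmidtNormed 𝕜 d n)).stronglyMeasurable.smul_const (gramSchmidtNormed 𝕜 d n))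
    (tendsto_pi_nhds.mpr fun t => ?_)
  simpa [htop, starProjection_top] using
    (hasSum_inner_gramSchmidtNormed_smul (𝕜 := 𝕜) d (g t)).tendsto_sum_nat

theorem mem_topologicalClosure_span_of_inner_sub_eq_zero {G d : ℕ → E} (hd : DenseRange d)
    {x : E} (hx : ∀ k, ⟪x, d k - G k⟫_𝕜 = 0) (hG : ∀ j k, ⟪G j, d k - G k⟫_𝕜 = 0) :
    x ∈ (span 𝕜 (range G)).topologicalClosure := by
  set N := (span 𝕜 (range G)).topologicalClosure
  have hperp k : d k - G k ∈ Nᗮ := by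
    rw [orthogonal_closure, mem_orthogonal_span_iff, forall_mem_range]
    exact fun j => hG j k
  have hy : x - N.starProjection x ∈ Nᗮ := sub_starProjection_mem_orthogonal x
  have hy0 : x - N.starProjection x = 0 := by
    refine Dense.eq_zero_of_inner_left 𝕜 hd ?_
    rintro _ ⟨k, rfl⟩
    have hGk : G k ∈ N := le_topologicalClosure _ (subset_span (mem_range_self k))
    rw [← sub_add_cancel (d k) (G k), inner_add_right, inner_sub_left, hx k,
      inner_right_of_mem_orthogonal (N.starProjection_apply_mem x) (hperp k),
      inner_left_of_mem_orthogonal hGk hy, sub_zero, add_zero]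
  rw [sub_eq_zero.mp hy0]
  exact N.starProjection_apply_mem x

end Hilbert

theorem ae_eq_zero_of_forall_integral_smul_eq_zero {X E : Type*} [TopologicalSpace X]
    [MeasurableSpace X] [BorelSpace X] [HasOuterApproxClosed X] [NormedAddCommGroup E]
    [NormedSpace ℝ E] [CompleteSpace E] {μ : Measure X} {F : X → E} (hF : Integrable F μ)
    (h : ∀ u : X →ᵇ ℝ≥0, ∫ x, (u x : ℝ) • F x ∂μ = 0) : F =ᵐ[μ] 0 := by
  refine ae_eq_zero_of_forall_setIntegral_isClosed_eq_zero hF fun s hs => ?_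
  have hlim : Tendsto (fun n => ∫ x, (hs.apprSeq n x : ℝ) • F x ∂μ) atTop
      (𝓝 (∫ x in s, F x ∂μ)) := by
    rw [← integral_indicator hs.measurableSet]
    refine tendsto_integral_of_dominated_convergence (fun x => ‖F x‖)
      (fun n => ?_) hF.norm (fun n => ae_of_all _ fun x => ?_) (ae_of_all _ fun x => ?_)
    · exact (NNReal.continuous_coe.comp (hs.apprSeq n).continuous).aestronglyMeasurable.smul hF.1
    · rw [norm_smul, NNReal.norm_eq]
      exact mul_le_of_le_one_left (norm_nonneg _)
        (HasOuterApproxClosed.apprSeq_apply_le_one hs n x)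
    · have hind : ((s.indicator (fun _ => (1 : ℝ≥0)) x : ℝ≥0) : ℝ) • F x = s.indicator F x := by
        by_cases hx : x ∈ s <;> simp [hx]
      rw [← hind]
      exact ((NNReal.continuous_coe.tendsto _).comp
        (tendsto_pi_nhds.mp (HasOuterApproxClosed.tendsto_apprSeq hs) x)).smul_const (F x)
  simp only [h, tendsto_const_nhds_iff] at hlim
  exact hlim.symm

section IntegralMul

variable {X : Type*} [TopologicalSpace X] [CompactSpace X] [MeasurableSpace X]
  [OpensMeasurableSpace X] {μ : Measure X} {F : X → ℂ}

theorem integrable_continuousMap_mul (hF : Integrable F μ) (u : C(X, ℂ)) :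
    Integrable (fun x => u x * F x) μ :=
  hF.bdd_mul u.continuous.aestronglyMeasurable (ae_of_all _ u.norm_coe_le_norm)

def integralMulCLM (hF : Integrable F μ) : C(X, ℂ) →L[ℂ] ℂ :=
  LinearMap.mkContinuous
    { toFun := fun u => ∫ x, u x * F x ∂μ
      map_add' := fun u v => by
        simp only [ContinuousMap.add_apply, add_mul]
        exact integral_add (integrable_continuousMap_mul hF u) (integrable_continuousMap_mul hF v)
      map_smul' := fun c u => by
        simp only [ContinuousMap.smul_apply, smul_eq_mul, mul_assoc, RingHom.id_apply]
        exact integral_const_mul c _ }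
    (∫ x, ‖F x‖ ∂μ) fun u => by
      refine (norm_integral_le_integral_norm _).trans ?_
      rw [mul_comm, ← integral_const_mul]
      refine integral_mono (integrable_continuousMap_mul hF u).norm (hF.norm.const_mul _)
        fun x => ?_
      rw [norm_mul]
      exact mul_le_mul_of_nonneg_right (u.norm_coe_le_norm x) (norm_nonneg _)

end IntegralMul

theorem ae_eq_zero_of_fourierCoeff_eq_zero {T : ℝ} [Fact (0 < T)] {F : AddCircle T → ℂ}
    (hF : Integrable F AddCircle.haarAddCircle) (h : ∀ n, fourierCoeff F n = 0) :
    F =ᵐ[AddCircle.haarAddCircle] 0 := by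
  have hL : ∀ u, integralMulCLM hF u = 0 := by
    have hle : (span ℂ (range (@fourier T))).topologicalClosure ≤ (integralMulCLM hF).ker := by
      refine topologicalClosure_minimal _ (span_le.mpr (range_subset_iff.mpr fun n => ?_))
        (integralMulCLM hF).isClosed_ker
      simpa [fourierCoeff, integralMulCLM] using h (-n)
    exact fun u => hle (span_fourier_closure_eq_top.ge mem_top)
  refine ae_eq_zero_of_forall_integral_smul_eq_zero hF fun u => ?_
  simp_rw [Complex.real_smul]
  exact hL ⟨fun x => ((u x : ℝ) : ℂ), by fun_prop⟩

section RangeFunctionMeasurability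

variable {F : Type*} [NormedAddCommGroup F] [InnerProductSpace ℂ F] [CompleteSpace F]

theorem projTo_eq_starProjection {N : Submodule ℂ F} (hN : IsClosed (N : Set F))
    [N.HasOrthogonalProjection] (x : F) : projTo N x = N.starProjection x := by
  rw [projTo, dif_pos hN]
  rfl

theorem isMeasRange_span {v : ℕ → 𝕋 → F} (hv : ∀ n, StronglyMeasurable (v n)) :
    IsMeasRange fun t => (span ℂ (range fun n => v n t)).topologicalClosure := by
  refine ⟨fun t => isClosed_topologicalClosure _, fun x y => ?_⟩
  simp_rw [projTo_eq_starProjection (isClosed_topologicalClosure _)]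
  exact ((stronglyMeasurable_starProjection_span hv x).inner stronglyMeasurable_const).measurable

end RangeFunctionMeasurability

section ShiftAlgebra

variable {E : Type*} [NormedAddCommGroup E] [NormedSpace ℂ E]

theorem mulF_mulF (m n : ℤ) (f : L2 E) : mulF m (mulF n f) = mulF (m + n) f := by
  refine Lp.ext ?_
  filter_upwards [coeFn_mulF m (mulF n f), coeFn_mulF n f, coeFn_mulF (m + n) f] with t h1 h2 h3
  rw [h1, h2, h3, fourier_add, mul_smul]

theorem mulF_zero_apply (f : L2 E) : mulF 0 f = f := by
  refine Lp.ext ?_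
  filter_upwards [coeFn_mulF 0 f] with t h
  rw [h, fourier_zero, one_smul]

variable {K : Type*} [NormedAddCommGroup K] [InnerProductSpace ℂ K]

theorem inner_mulF_left (n : ℤ) (f g : L2 K) :
    ⟪mulF n f, g⟫_ℂ = ∫ t, fourier (-n) t * ⟪(f : 𝕋 → K) t, (g : 𝕋 → K) t⟫_ℂ ∂μT := by
  rw [L2.inner_def]
  refine integral_congr_ae ?_
  filter_upwards [coeFn_mulF n f] with t h
  rw [h, inner_smul_left, ← fourier_neg]

theorem inner_mulF_left_eq_inner_mulF_neg (n : ℤ) (f g : L2 K) :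
    ⟪mulF n f, g⟫_ℂ = ⟪f, mulF (-n) g⟫_ℂ := by
  rw [L2.inner_def, L2.inner_def]
  refine integral_congr_ae ?_
  filter_upwards [coeFn_mulF n f, coeFn_mulF (-n) g] with t h1 h2
  rw [h1, h2, inner_smul_left, inner_smul_right, ← fourier_neg]

theorem ae_inner_eq_zero_of_forall_inner_mulF {f g : L2 K} (h : ∀ n, ⟪mulF n f, g⟫_ℂ = 0) :
    ∀ᵐ t ∂μT, ⟪(f : 𝕋 → K) t, (g : 𝕋 → K) t⟫_ℂ = 0 :=
  ae_eq_zero_of_fourierCoeff_eq_zero (L2.integrable_inner f g) fun n => by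
    simpa only [inner_mulF_left, fourierCoeff, smul_eq_mul] using h n

theorem coeFn_expVec_zero {K : Type} [NormedAddCommGroup K] [InnerProductSpace ℂ K]
    [CompleteSpace K] (x : K) : (expVec K 0 x : 𝕋 → K) =ᵐ[μT] fun _ => x := by
  filter_upwards [coeFn_expVec K 0 x] with t ht
  rw [ht, fourier_zero, one_smul]

end ShiftAlgebra

section Reducing

variable {K : Type*} [NormedAddCommGroup K] [InnerProductSpace ℂ K] {M : Submodule ℂ (L2 K)}

theorem reducing_of_forall_mulF_mem (hM : ∀ n : ℤ, ∀ f ∈ M, mulF n f ∈ M) :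
    Reducing (mulF 1) M := by
  refine ⟨hM 1, fun h hh u hu => ?_⟩
  rw [← neg_neg (1 : ℤ), ← inner_mulF_left_eq_inner_mulF_neg]
  exact hh _ (hM (-1) u hu)

theorem Reducing.mulF_mem [CompleteSpace M] (hred : Reducing (mulF 1) M) (n : ℤ) {f : L2 K}
    (hf : f ∈ M) : mulF n f ∈ M := by
  have hneg : ∀ f ∈ M, mulF (-1) f ∈ M := fun f hf => by
    rw [← orthogonal_orthogonal M]
    intro u hu
    rw [← inner_mulF_left_eq_inner_mulF_neg]
    exact inner_left_of_mem_orthogonal hf (hred.2 u hu)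
  induction n using Int.induction_on with
  | zero => rwa [mulF_zero_apply]
  | succ k ih =>
    rw [add_comm, ← mulF_mulF]
    exact hred.1 _ ih
  | pred k ih =>
    rw [sub_eq_neg_add, ← mulF_mulF]
    exact hneg _ ih

theorem ae_inner_eq_zero_of_reducing [CompleteSpace M] (hred : Reducing (mulF 1) M)
    {f h : L2 K} (hf : f ∈ M) (hh : h ∈ Mᗮ) :
    ∀ᵐ t ∂μT, ⟪(f : 𝕋 → K) t, (h : 𝕋 → K) t⟫_ℂ = 0 :=
  ae_inner_eq_zero_of_forall_inner_mulF fun n =>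
    inner_right_of_mem_orthogonal (hred.mulF_mem n hf) hh

end Reducing

section RangeFunction

variable {E : Type*} [NormedAddCommGroup E] [NormedSpace ℂ E] {J : 𝕋 → Submodule ℂ E}

def rangeSubmodule (J : 𝕋 → Submodule ℂ E) : Submodule ℂ (L2 E) where
  carrier := rangeSet J
  zero_mem' := by
    filter_upwards [Lp.coeFn_zero E 2 μT] with t ht
    rw [ht]
    exact (J t).zero_mem
  add_mem' {f g} hf hg := by
    filter_upwards [hf, hg, Lp.coeFn_add f g] with t hft hgt ht
    rw [ht]
    exact (J t).add_mem hft hgt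
  smul_mem' c f hf := by
    filter_upwards [hf, Lp.coeFn_smul c f] with t hft ht
    rw [ht]
    exact (J t).smul_mem c hft

theorem isClosed_rangeSet (hJ : ∀ t, IsClosed (J t : Set E)) : IsClosed (rangeSet J) := by
  refine isSeqClosed_iff_isClosed.mp fun f g hf hfg => ?_
  obtain ⟨ns, -, hns⟩ := (tendstoInMeasure_of_tendsto_Lp hfg).exists_seq_tendsto_ae
  filter_upwards [hns, ae_all_iff.mpr hf] with t hlim hmem
  exact (hJ t).mem_of_tendsto hlim (Eventually.of_forall fun k => hmem (ns k))

theorem mulF_mem_rangeSet (n : ℤ) {f : L2 E} (hf : f ∈ rangeSet J) : mulF n f ∈ rangeSet J := by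
  filter_upwards [hf, coeFn_mulF n f] with t hft ht
  rw [ht]
  exact (J t).smul_mem _ hft

theorem reducing_of_coe_eq_rangeSet {K : Type*} [NormedAddCommGroup K] [InnerProductSpace ℂ K]
    {M : Submodule ℂ (L2 K)} {J : 𝕋 → Submodule ℂ K} (hM : (M : Set (L2 K)) = rangeSet J) :
    Reducing (mulF 1) M :=
  reducing_of_forall_mulF_mem fun n f hf => by
    rw [← SetLike.mem_coe, hM] at hf ⊢
    exact mulF_mem_rangeSet n hf

end RangeFunction

section MeasurableRangeFunction

variable {K : Type*} [NormedAddCommGroup K] [InnerProductSpace ℂ K] [CompleteSpace K]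
  [SecondCountableTopology K] {J : 𝕋 → Submodule ℂ K}

theorem stronglyMeasurable_projTo (hJ : IsMeasRange J) (x : K) :
    StronglyMeasurable fun t => projTo (J t) x :=
  stronglyMeasurable_of_forall_inner (𝕜 := ℂ) fun y => by
    simpa only [Function.comp_def, inner_conj_symm] using
      Complex.continuous_conj.measurable.comp (hJ.2 x y)

theorem memLp_projTo (hJ : IsMeasRange J) (x : K) : MemLp (fun t => projTo (J t) x) 2 μT := by
  refine MemLp.of_bound (stronglyMeasurable_projTo hJ x).aestronglyMeasurable ‖x‖
    (ae_of_all _ fun t => ?_)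
  have := (hJ.1 t).completeSpace_coe
  rw [projTo_eq_starProjection (hJ.1 t)]
  exact (J t).norm_starProjection_apply_le x

theorem ae_le_of_rangeSet_subset {J₂ : 𝕋 → Submodule ℂ K} (hJ : IsMeasRange J)
    (hJ₂ : ∀ t, IsClosed (J₂ t : Set K)) (hsub : rangeSet J ⊆ rangeSet J₂) :
    ∀ᵐ t ∂μT, J t ≤ J₂ t := by
  have : Nonempty K := ⟨0⟩
  obtain ⟨d, hd⟩ := TopologicalSpace.exists_dense_seq K
  have hproj : ∀ k, ∀ᵐ t ∂μT, projTo (J t) (d k) ∈ J₂ t := fun k => by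
    have hmem : (memLp_projTo hJ (d k)).toLp _ ∈ rangeSet J := by
      filter_upwards [(memLp_projTo hJ (d k)).coeFn_toLp] with t ht
      have := (hJ.1 t).completeSpace_coe
      rw [ht, projTo_eq_starProjection (hJ.1 t)]
      exact (J t).starProjection_apply_mem _
    filter_upwards [hsub hmem, (memLp_projTo hJ (d k)).coeFn_toLp] with t ht hcoe
    rwa [hcoe] at ht
  filter_upwards [ae_all_iff.mpr hproj] with t ht
  have := (hJ.1 t).completeSpace_coe
  simp only [projTo_eq_starProjection (hJ.1 t)] at ht
  exact le_of_forall_starProjection_mem (hJ₂ t) hd ht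

theorem ae_eq_of_rangeSet_eq {J₂ : 𝕋 → Submodule ℂ K} (hJ : IsMeasRange J)
    (hJ₂ : IsMeasRange J₂) (h : rangeSet J = rangeSet J₂) : ∀ᵐ t ∂μT, J t = J₂ t := by
  filter_upwards [ae_le_of_rangeSet_subset hJ hJ₂.1 h.le,
    ae_le_of_rangeSet_subset hJ₂ hJ.1 h.ge] with t h₁ h₂
  exact le_antisymm h₁ h₂

end MeasurableRangeFunction

section ReducingToRangeFunction

variable {K : Type} [NormedAddCommGroup K] [InnerProductSpace ℂ K]
  {M : Submodule ℂ (L2 K)} [CompleteSpace M] {d : ℕ → K} {G : ℕ → 𝕋 → K}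

theorem ae_inner_sub_eq_zero_of_reducing [CompleteSpace K] (hred : Reducing (mulF 1) M)
    (hG : ∀ k, (M.starProjection (expVec K 0 (d k)) : 𝕋 → K) =ᵐ[μT] G k) {f : L2 K}
    (hf : f ∈ M) : ∀ᵐ t ∂μT, ∀ k, ⟪(f : 𝕋 → K) t, d k - G k t⟫_ℂ = 0 := by
  refine ae_all_iff.mpr fun k => ?_
  have hperp := sub_starProjection_mem_orthogonal (K := M) (expVec K 0 (d k))
  filter_upwards [ae_inner_eq_zero_of_reducing hred hf hperp, Lp.coeFn_sub (expVec K 0 (d k)) _,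
    coeFn_expVec_zero (d k), hG k] with t ht hsub hconst hGk
  rwa [hsub, Pi.sub_apply, hconst, hGk] at ht

theorem ae_mem_span_of_reducing [CompleteSpace K] (hred : Reducing (mulF 1) M) (hd : DenseRange d)
    (hG : ∀ k, (M.starProjection (expVec K 0 (d k)) : 𝕋 → K) =ᵐ[μT] G k) {f : L2 K}
    (hf : f ∈ M) :
    ∀ᵐ t ∂μT, (f : 𝕋 → K) t ∈ (span ℂ (range fun k => G k t)).topologicalClosure := by
  have hGG : ∀ᵐ t ∂μT, ∀ j k, ⟪G j t, d k - G k t⟫_ℂ = 0 := by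
    refine ae_all_iff.mpr fun j => ?_
    filter_upwards [ae_inner_sub_eq_zero_of_reducing hred hG (M.starProjection_apply_mem _),
      hG j] with t ht hGj
    rwa [hGj] at ht
  filter_upwards [ae_inner_sub_eq_zero_of_reducing hred hG hf, hGG] with t hft hGGt
  exact mem_topologicalClosure_span_of_inner_sub_eq_zero hd hft hGGt

theorem mem_of_ae_mem_span_of_reducing (hred : Reducing (mulF 1) M)
    (hG : ∀ k, (M.starProjection (expVec K 0 (d k)) : 𝕋 → K) =ᵐ[μT] G k) {f : L2 K}
    (hf : ∀ᵐ t ∂μT, (f : 𝕋 → K) t ∈ (span ℂ (range fun k => G k t)).topologicalClosure) :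
    f ∈ M := by
  rw [← orthogonal_orthogonal M]
  intro h hh
  have hGh : ∀ᵐ t ∂μT, ∀ k, ⟪G k t, (h : 𝕋 → K) t⟫_ℂ = 0 := by
    refine ae_all_iff.mpr fun k => ?_
    filter_upwards [ae_inner_eq_zero_of_reducing hred (M.starProjection_apply_mem _) hh, hG k]
      with t ht hGk
    rwa [hGk] at ht
  rw [L2.inner_def, ← integral_zero 𝕋 ℂ]
  refine integral_congr_ae ?_
  filter_upwards [hf, hGh] with t hft hGht
  refine inner_left_of_mem_orthogonal hft ?_
  rwa [orthogonal_closure, mem_orthogonal_span_iff, forall_mem_range]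

theorem exists_isMeasRange_of_reducing [CompleteSpace K] [SecondCountableTopology K]
    (hred : Reducing (mulF 1) M) :
    ∃ J : 𝕋 → Submodule ℂ K, IsMeasRange J ∧ (M : Set (L2 K)) = rangeSet J := by
  have : Nonempty K := ⟨0⟩
  obtain ⟨d, hd⟩ := TopologicalSpace.exists_dense_seq K
  have hg k := Lp.aestronglyMeasurable (M.starProjection (expVec K 0 (d k)))
  refine ⟨_, isMeasRange_span fun k => (hg k).stronglyMeasurable_mk, ?_⟩
  ext f
  exact ⟨ae_mem_span_of_reducing hred hd fun k => (hg k).ae_eq_mk,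
    mem_of_ae_mem_span_of_reducing hred fun k => (hg k).ae_eq_mk⟩

end ReducingToRangeFunction

theorem ae_eq_topologicalClosure_span_of_eq_closure_span_mulF {K : Type} [NormedAddCommGroup K]
    [InnerProductSpace ℂ K] [CompleteSpace K] [SecondCountableTopology K]
    {M : Submodule ℂ (L2 K)} {J : 𝕋 → Submodule ℂ K} (hJ : IsMeasRange J)
    (hMJ : (M : Set (L2 K)) = rangeSet J) {ι : Type*} [Countable ι] {A : ι → L2 K}
    (hM : M = (span ℂ {g : L2 K | ∃ (i : ι) (k : ℤ), g = mulF k (A i)}).topologicalClosure) :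
    ∀ᵐ t ∂μT, J t = (span ℂ {v : K | ∃ i : ι, v = (A i : 𝕋 → K) t}).topologicalClosure := by
  set J' := fun t => (span ℂ {v : K | ∃ i : ι, v = (A i : 𝕋 → K) t}).topologicalClosure
  have hAJ' i : A i ∈ rangeSet J' :=
    ae_of_all _ fun t => le_topologicalClosure _ (subset_span ⟨i, rfl⟩)
  have hsub : rangeSet J ⊆ rangeSet J' := by
    rw [← hMJ, hM]
    refine SetLike.coe_subset_coe.mpr (topologicalClosure_minimal (t := rangeSubmodule J') _
      (span_le.mpr ?_) (isClosed_rangeSet fun t => isClosed_topologicalClosure _))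
    rintro _ ⟨i, k, rfl⟩
    exact mulF_mem_rangeSet k (hAJ' i)
  have hAM i : A i ∈ M := by
    rw [hM]
    exact le_topologicalClosure _ (subset_span ⟨i, 0, (mulF_zero_apply (A i)).symm⟩)
  have hAJ : ∀ᵐ t ∂μT, ∀ i, (A i : 𝕋 → K) t ∈ J t :=
    ae_all_iff.mpr fun i => (hMJ ▸ SetLike.mem_coe.mpr (hAM i) : A i ∈ rangeSet J)
  filter_upwards [ae_le_of_rangeSet_subset hJ (fun t => isClosed_topologicalClosure _) hsub, hAJ]
    with t hle hA
  refine le_antisymm hle (topologicalClosure_minimal _ (span_le.mpr ?_) (hJ.1 t))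
  rintro _ ⟨i, rfl⟩
  exact hA i

section Statements

variable (K : Type) [NormedAddCommGroup K] [InnerProductSpace ℂ K] [CompleteSpace K]
  [SecondCountableTopology K]

theorem statement5 :
    (∀ M : Submodule ℂ (L2 K), IsClosed ((M : Set (L2 K))) →
      (Reducing (mulF 1) M ↔
        ∃ J : 𝕋 → Submodule ℂ K, IsMeasRange J ∧ (M : Set (L2 K)) = rangeSet J)) ∧
    (∀ J : 𝕋 → Submodule ℂ K, IsMeasRange J →
      ∃ M : Submodule ℂ (L2 K), IsClosed ((M : Set (L2 K))) ∧ Reducing (mulF 1) M ∧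
        (M : Set (L2 K)) = rangeSet J) ∧
    (∀ J₁ J₂ : 𝕋 → Submodule ℂ K, IsMeasRange J₁ → IsMeasRange J₂ →
      rangeSet J₁ = rangeSet J₂ → ∀ᵐ t ∂μT, J₁ t = J₂ t) ∧
    (∀ (M : Submodule ℂ (L2 K)) (J : 𝕋 → Submodule ℂ K), IsMeasRange J →
      (M : Set (L2 K)) = rangeSet J →
      ∀ (ι : Type) (_ : Countable ι) (A : ι → L2 K),
        M = (Submodule.span ℂ
              {g : L2 K | ∃ (i : ι) (k : ℤ), g = mulF k (A i)}).topologicalClosure →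
        ∀ᵐ t ∂μT, J t =
          (Submodule.span ℂ {v : K | ∃ i : ι, v = (A i : 𝕋 → K) t}).topologicalClosure) := by
  refine ⟨fun M hM => ⟨fun hred => ?_, fun ⟨_, _, hMJ⟩ => reducing_of_coe_eq_rangeSet hMJ⟩,
    fun J hJ => ⟨rangeSubmodule J, isClosed_rangeSet hJ.1, reducing_of_coe_eq_rangeSet rfl, rfl⟩,
    fun _ _ h₁ h₂ h => ae_eq_of_rangeSet_eq h₁ h₂ h,
    fun _ _ hJ hMJ _ _ _ hM => ae_eq_topologicalClosure_span_of_eq_closure_span_mulF hJ hMJ hM⟩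
  have := hM.completeSpace_coe
  exact exists_isMeasRange_of_reducing hred

end Statements

end ShiftPaper
end
end
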